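/- The largest zero x_n of the generalized Laguerre polynomial L_n^{(α)} with α > -1 satisfies x_n < 2n + α + 1 + √((2n+α+1)² + 1/4 - α²). -/

import Mathlib

/-!
Put `G_k = (-1)^k k! L_k^{(α)}(x)`. The three-term recurrence of the Laguerre polynomials becomes
`G_{k+2} = (x - 2k - 3 - α) G_{k+1} - (k+1)(k+1+α) G_k`, with `G_0 = 1` and `G_1 = x - α - 1`.
Let `T` be the square root in the bound and `t = 1 + T/2`. If `x ≥ 2n + α + 1 + T`, then for
`k ≤ n - 2` the coefficients satisfy `x - 2k - 3 - α ≥ 2t` and `0 ≤ (k+1)(k+1+α) ≤ t²`, and an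
induction gives `G_{k+1} ≥ t G_k > 0` up to `k = n - 1`. Hence `G_n > 0`, so `x` is not a zero.
-/

open Finset

/-- The generalized Laguerre polynomial `L_n^{(α)}(x) = ∑_{k=0}^n binom(n+α, n-k) (-x)^k / k!`. -/
noncomputable def lagL (n : ℕ) (α : ℝ) (x : ℝ) : ℝ :=
  ∑ k ∈ Finset.range (n + 1),
    ((∏ i ∈ Finset.range (n - k), (α + (k : ℝ) + 1 + (i : ℝ))) / (Nat.factorial (n - k) : ℝ))
      * (-x) ^ k / (Nat.factorial k : ℝ)

open scoped Nat

theorem pos_and_mul_le_of_three_term_recurrence {G a b : ℕ → ℝ} {t : ℝ} {n : ℕ} (ht : 0 < t)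
    (hrec : ∀ k, k + 2 ≤ n → G (k + 2) = a k * G (k + 1) - b k * G k)
    (ha : ∀ k, k + 2 ≤ n → 2 * t ≤ a k) (hb : ∀ k, k + 2 ≤ n → 0 ≤ b k ∧ b k ≤ t ^ 2)
    (h0 : 0 < G 0) (h1 : 1 ≤ n → t * G 0 ≤ G 1) :
    ∀ k, k + 1 ≤ n → 0 < G k ∧ t * G k ≤ G (k + 1) := by
  intro k
  induction k with
  | zero => exact fun hn => ⟨h0, h1 hn⟩
  | succ k ih =>
    intro hk
    obtain ⟨hGk, hstep⟩ := ih (by omega)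
    have hGk1 : 0 < G (k + 1) := (mul_pos ht hGk).trans_le hstep
    obtain ⟨hb0, hbt⟩ := hb k hk
    refine ⟨hGk1, le_of_mul_le_mul_left ?_ ht⟩
    -- `t G_{k+2} - t² G_{k+1} = t (a - 2t) G_{k+1} + b (G_{k+1} - t G_k) + (t² - b) G_{k+1}`
    rw [hrec k hk]
    nlinarith [mul_nonneg (mul_nonneg ht.le (sub_nonneg.2 (ha k hk))) hGk1.le,
      mul_nonneg hb0 (sub_nonneg.2 hstep), mul_nonneg (sub_nonneg.2 hbt) hGk1.le]

theorem pos_of_three_term_recurrence {G a b : ℕ → ℝ} {t : ℝ} {n : ℕ} (ht : 0 < t)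
    (hrec : ∀ k, k + 2 ≤ n → G (k + 2) = a k * G (k + 1) - b k * G k)
    (ha : ∀ k, k + 2 ≤ n → 2 * t ≤ a k) (hb : ∀ k, k + 2 ≤ n → 0 ≤ b k ∧ b k ≤ t ^ 2)
    (h0 : 0 < G 0) (h1 : 1 ≤ n → t * G 0 ≤ G 1) : 0 < G n := by
  rcases n with _ | n
  · exact h0
  · obtain ⟨hGn, hstep⟩ := pos_and_mul_le_of_three_term_recurrence ht hrec ha hb h0 h1 n le_rfl
    exact (mul_pos ht hGn).trans_le hstep

/-- The coefficient `binom(n+α, n-k)` of `(-x)^k / k!` in `L_n^{(α)}`. -/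
noncomputable def lagCoeff (α : ℝ) (n k : ℕ) : ℝ :=
  (∏ i ∈ range (n - k), (α + k + 1 + i)) / (n - k)!

section LaguerreRecurrence

variable (α : ℝ)

theorem lagL_eq_sum (n : ℕ) (x : ℝ) :
    lagL n α x = ∑ k ∈ range (n + 1), lagCoeff α n k * (-x) ^ k / k ! := rfl

theorem lagCoeff_add_left (k m : ℕ) :
    lagCoeff α (k + m) k = (∏ i ∈ range m, (α + k + 1 + i)) / m ! := by
  simp [lagCoeff]

theorem lagCoeff_self (n : ℕ) : lagCoeff α n n = 1 := by
  simpa using lagCoeff_add_left α n 0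

theorem lagCoeff_succ_self (n : ℕ) : lagCoeff α (n + 1) n = α + n + 1 := by
  simpa using lagCoeff_add_left α n 1

theorem natCast_mul_lagCoeff_pred (k m : ℕ) :
    k * lagCoeff α (k + m + 1) (k - 1)
      = k * ((α + k) * (∏ i ∈ range (m + 1), (α + k + 1 + i)) / (m + 2)!) := by
  rcases k with _ | j
  · simp
  · rw [show j + 1 + m + 1 = j + (m + 2) by omega, Nat.add_sub_cancel, lagCoeff_add_left,
      prod_range_succ' _ (m + 1)]
    have hshift : ∏ i ∈ range (m + 1), (α + j + 1 + (i + 1 : ℕ))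
        = ∏ i ∈ range (m + 1), (α + (j + 1 : ℕ) + 1 + i) :=
      prod_congr rfl fun i _ => by push_cast; ring
    rw [hshift]
    push_cast
    ring

theorem lagCoeff_recurrence (k m : ℕ) :
    (k + m + 2) * lagCoeff α (k + m + 2) k
      = (2 * (k + m) + 3 + α) * lagCoeff α (k + m + 1) k
        + k * lagCoeff α (k + m + 1) (k - 1)
        - (k + m + 1 + α) * lagCoeff α (k + m) k := by
  rw [natCast_mul_lagCoeff_pred, lagCoeff_add_left, show k + m + 1 = k + (m + 1) by omega,
    show k + m + 2 = k + (m + 2) by omega, lagCoeff_add_left, lagCoeff_add_left, prod_range_succ,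
    prod_range_succ]
  simp only [Nat.factorial_succ]
  push_cast
  field_simp
  ring

theorem mul_lagL (n : ℕ) (x : ℝ) :
    x * lagL n α x = -∑ k ∈ range (n + 2), k * lagCoeff α n (k - 1) * (-x) ^ k / k ! := by
  rw [sum_range_succ', lagL_eq_sum, mul_sum]
  simp only [Nat.cast_zero, zero_mul, zero_div, add_zero, ← sum_neg_distrib]
  refine sum_congr rfl fun k _ => ?_
  simp only [Nat.add_sub_cancel, Nat.factorial_succ, pow_succ]
  push_cast
  field_simp

theorem lagL_recurrence (n : ℕ) (x : ℝ) :
    (n + 2) * lagL (n + 2) α x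
      = (2 * n + 3 + α - x) * lagL (n + 1) α x - (n + 1 + α) * lagL n α x := by
  set S : ℕ → ℝ := fun m => ∑ k ∈ range (n + 1), lagCoeff α m k * (-x) ^ k / (k ! : ℝ)
  set D : ℝ := ∑ k ∈ range (n + 1), k * lagCoeff α (n + 1) (k - 1) * (-x) ^ k / (k ! : ℝ)
  have hcoeff : (n + 2) * S (n + 2) = (2 * n + 3 + α) * S (n + 1) + D - (n + 1 + α) * S n := by
    simp only [S, D, mul_sum, ← sum_add_distrib, ← sum_sub_distrib]
    refine sum_congr rfl fun k hk => ?_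
    obtain ⟨m, rfl⟩ := Nat.exists_eq_add_of_le (Nat.lt_succ_iff.1 (mem_range.1 hk))
    have h := lagCoeff_recurrence α k m
    push_cast at h ⊢
    linear_combination (-x) ^ k / (k ! : ℝ) * h
  set u : ℝ := (-x) ^ (n + 1) / ((n + 1)! : ℝ) with hu
  have htop : (n + 2) * ((-x) ^ (n + 2) / ((n + 2)! : ℝ)) = -x * u := by
    rw [hu, Nat.factorial_succ (n + 1), pow_succ]
    push_cast
    field_simp
    ring
  have h0 : lagL n α x = S n := rfl
  have h1 : lagL (n + 1) α x = S (n + 1) + u := by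
    rw [lagL_eq_sum, sum_range_succ, lagCoeff_self, one_mul]
  have h2 : (n + 2) * lagL (n + 2) α x = (n + 2) * (S (n + 2) + (α + n + 2) * u) - x * u := by
    rw [lagL_eq_sum, sum_range_succ, sum_range_succ, lagCoeff_self, one_mul, lagCoeff_succ_self]
    push_cast
    linear_combination htop
  have hx : x * lagL (n + 1) α x = -(D + (n + 1) * (α + n + 1) * u - x * u) := by
    rw [mul_lagL, sum_range_succ, sum_range_succ, Nat.add_sub_cancel, lagCoeff_succ_self,
      show n + 1 + 1 - 1 = n + 1 by omega, lagCoeff_self, mul_one]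
    push_cast
    linear_combination -htop
  linear_combination h2 - (2 * n + 3 + α) * h1 + hx + (n + 1 + α) * h0 + hcoeff

end LaguerreRecurrence

noncomputable def monicLagL (n : ℕ) (α x : ℝ) : ℝ := (-1) ^ n * n ! * lagL n α x

section MonicLaguerre

variable (α x : ℝ)

theorem monicLagL_zero : monicLagL 0 α x = 1 := by
  simp [monicLagL, lagL]

theorem monicLagL_one : monicLagL 1 α x = x - (α + 1) := by
  rw [monicLagL, lagL_eq_sum, sum_range_succ, sum_range_one, lagCoeff_self, lagCoeff_succ_self α 0]
  norm_num
  ring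

theorem monicLagL_recurrence (n : ℕ) :
    monicLagL (n + 2) α x
      = (x - (2 * n + 3 + α)) * monicLagL (n + 1) α x
        - (n + 1) * (n + 1 + α) * monicLagL n α x := by
  simp only [monicLagL, Nat.factorial_succ]
  push_cast
  linear_combination (-1) ^ n * (n + 1) * (n ! : ℝ) * lagL_recurrence α n x

end MonicLaguerre

/-- Szegő's bound: every zero `x` of `L_n^{(α)}` with `α > -1` satisfies
`x < 2n + α + 1 + √((2n+α+1)² + 1/4 - α²)`; in particular the largest zero does. -/
theorem laguerre_largest_zero_bound (n : ℕ) (α : ℝ) (hα : -1 < α)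
    (x : ℝ) (hzero : lagL n α x = 0) :
    x < 2 * (n : ℝ) + α + 1
        + Real.sqrt ((2 * (n : ℝ) + α + 1) ^ 2 + 1 / 4 - α ^ 2) := by
  by_contra! hx
  set T := Real.sqrt ((2 * (n : ℝ) + α + 1) ^ 2 + 1 / 4 - α ^ 2) with hT
  have hT0 : 0 ≤ T := Real.sqrt_nonneg _
  have hT2 : (2 * (n : ℝ) + α + 1) ^ 2 + 1 / 4 - α ^ 2 ≤ T ^ 2 :=
    hT ▸ Real.sq_sqrt' ▸ le_max_left _ _
  have hcast {k : ℕ} (hk : k + 2 ≤ n) : (k : ℝ) + 2 ≤ n := by exact_mod_cast hk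
  have ha (k : ℕ) (hk : k + 2 ≤ n) : 2 * (1 + T / 2) ≤ x - (2 * k + 3 + α) := by
    linarith [hcast hk]
  have hb (k : ℕ) (hk : k + 2 ≤ n) :
      0 ≤ (k + 1) * (k + 1 + α) ∧ (k + 1) * (k + 1 + α) ≤ (1 + T / 2) ^ 2 := by
    have := hcast hk
    constructor <;> nlinarith
  have h1 (hn : 1 ≤ n) : (1 + T / 2) * monicLagL 0 α x ≤ monicLagL 1 α x := by
    have : (1 : ℝ) ≤ n := by exact_mod_cast hn
    rw [monicLagL_zero, monicLagL_one]
    linarith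
  have hpos : 0 < monicLagL n α x :=
    pos_of_three_term_recurrence (G := (monicLagL · α x)) (by positivity)
      (fun k _ => monicLagL_recurrence α x k) ha hb (by rw [monicLagL_zero]; norm_num) h1
  simp [monicLagL, hzero] at hpos
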